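/- Let G be a group, M and N G-modules over ℚ_p, with a G-equivariant bilinear pairing M × M → N. For 1-cochains c : G → ℚ_p (G acting trivially on ℚ_p) and a : G → M define (c ∪ a)(g,h) := c(g)·(g·a(h)) ∈ N-valued appropriately, and for b : G → M, a : G → M define (b ∪ a)(g,h) := [b(g), g·a(h)] ∈ N. If c and a₁ are 1-cocycles, b is a 1-cochain with db = c ∪ a₁, and a₂ is a 1-cochain with values in N satisfying da₂ = -(1/2)(a₁ ∪ a₁), then the 2-cochain φ := b ∪ a₁ - 2(c ∪ a₂) is a 2-cocycle: dφ = 0. -/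
import Mathlib


/-- Lemma 2.1: if `c` and `a₁` are 1-cocycles, `db = c ∪ a₁`, and
`da₂ = -(1/2)(a₁ ∪ a₁)`, then the Massey-type 2-cochain
`φ = b ∪ a₁ - 2(c ∪ a₂)` is a 2-cocycle. -/
theorem massey_two_cocycle (p : ℕ) [Fact p.Prime] {G M N : Type*} [Group G]
    [AddCommGroup M] [Module ℚ_[p] M] [AddCommGroup N] [Module ℚ_[p] N]
    (br : M → M → N)
    (hbr_addl : ∀ x y z, br (x + y) z = br x z + br y z)
    (hbr_addr : ∀ x y z, br x (y + z) = br x y + br x z)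
    (hbr_smull : ∀ (c : ℚ_[p]) (x y : M), br (c • x) y = c • br x y)
    (hbr_smulr : ∀ (c : ℚ_[p]) (x y : M), br x (c • y) = c • br x y)
    (hbr_anti : ∀ x y, br x y = - br y x)
    (ρM : G → M → M) (ρN : G → N → N)
    (hρM_mul : ∀ g h x, ρM (g * h) x = ρM g (ρM h x))
    (hρM_add : ∀ g x y, ρM g (x + y) = ρM g x + ρM g y)
    (hρM_smul : ∀ g (c : ℚ_[p]) x, ρM g (c • x) = c • ρM g x)
    (hρN_mul : ∀ g h x, ρN (g * h) x = ρN g (ρN h x))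
    (hρN_add : ∀ g x y, ρN g (x + y) = ρN g x + ρN g y)
    (hρN_smul : ∀ g (c : ℚ_[p]) x, ρN g (c • x) = c • ρN g x)
    (hbr_equiv : ∀ g x y, ρN g (br x y) = br (ρM g x) (ρM g y))
    -- c : G → ℚ_p a 1-cocycle for the trivial action
    (c : G → ℚ_[p]) (hc : ∀ g h, c (g * h) = c g + c h)
    -- a₁ : G → M a 1-cocycle
    (a₁ : G → M) (ha₁ : ∀ g h, a₁ (g * h) = a₁ g + ρM g (a₁ h))
    -- b : G → M a 1-cochain with db = c ∪ a₁
    (b : G → M)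
    (hb : ∀ g h, ρM g (b h) - b (g * h) + b g = c g • ρM g (a₁ h))
    -- a₂ : G → N a 1-cochain with da₂ = -(1/2)(a₁ ∪ a₁)
    (a₂ : G → N)
    (ha₂ : ∀ g h, ρN g (a₂ h) - a₂ (g * h) + a₂ g
        = -((2⁻¹ : ℚ_[p]) • br (a₁ g) (ρM g (a₁ h)))) :
    -- φ := b ∪ a₁ - 2(c ∪ a₂) satisfies dφ = 0
    ∀ g h k : G,
      (let φ : G → G → N :=
        fun g h => br (b g) (ρM g (a₁ h)) - (2 : ℚ_[p]) • (c g • ρN g (a₂ h));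
      ρN g (φ h k) - φ (g * h) k + φ g (h * k) - φ g h) = 0 := by
  intro g h k
  simp only []
  have hρN_sub : ∀ g x y, ρN g (x - y) = ρN g x - ρN g y := by
    intro g x y
    have h := hρN_add g y (x - y)
    rw [add_sub_cancel] at h
    linear_combination (norm := module) -h
  have hbr_subl : ∀ x y z, br (x - y) z = br x z - br y z := by
    intro x y z
    have h := hbr_addl y (x - y) z
    rw [add_sub_cancel] at h
    linear_combination (norm := module) -h
  have hbgh : b (g * h) = ρM g (b h) + b g - c g • ρM g (a₁ h) := by
    linear_combination (norm := module) - hb g h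
  have ha₂gh : a₂ (g * h)
      = ρN g (a₂ h) + a₂ g + (2⁻¹ : ℚ_[p]) • br (a₁ g) (ρM g (a₁ h)) := by
    linear_combination (norm := module) - ha₂ g h
  have ha₂hk : a₂ (h * k)
      = ρN h (a₂ k) + a₂ h + (2⁻¹ : ℚ_[p]) • br (a₁ h) (ρM h (a₁ k)) := by
    linear_combination (norm := module) - ha₂ h k
  simp only [hbgh, ha₂gh, ha₂hk, ha₁, hc, hρM_mul, hρN_mul, hρM_add, hρN_add,
    hρM_smul, hρN_smul, hρN_sub, hbr_addl, hbr_addr, hbr_subl, hbr_smull, hbr_smulr, hbr_equiv]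
  module
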